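/- Let ε > 0 and let S ∈ O(d)^{⊗n} satisfy d_F(S,Z) ≤ ε√(nd). Then the smallest singular value of Z^T S ∈ ℝ^{d×d} satisfies σ_min(Z^T S) ≥ n(1 − ε²d/2). -/

import Mathlib

open MeasureTheory Matrix Filter

namespace GOPP

/-- Frobenius norm of a real matrix. -/
noncomputable def frob {α β : Type*} [Fintype α] [Fintype β] (X : Matrix α β ℝ) : ℝ :=
  Real.sqrt (∑ i, ∑ j, X i j ^ 2)

/-- Euclidean norm of a vector. -/
noncomputable def vnorm {β : Type*} [Fintype β] (v : β → ℝ) : ℝ :=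
  Real.sqrt (∑ j, v j ^ 2)

/-- Operator (spectral) norm: the supremum of ‖Xu‖ over unit vectors u. -/
noncomputable def opNorm {α β : Type*} [Fintype α] [Fintype β] (X : Matrix α β ℝ) : ℝ :=
  sSup {r : ℝ | ∃ u : β → ℝ, vnorm u = 1 ∧ r = vnorm (X.mulVec u)}

/-- Smallest singular value: the infimum of ‖uᵀX‖ over unit vectors u (for a d×m matrix
with d ≤ m this is the d-th largest singular value; for square matrices it is σ_min). -/
noncomputable def sigmaMin {α β : Type*} [Fintype α] [Fintype β] (X : Matrix α β ℝ) : ℝ :=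
  sInf {r : ℝ | ∃ u : α → ℝ, vnorm u = 1 ∧ r = vnorm (Matrix.vecMul u X)}

/-- Condition number κ = σ_max/σ_min. -/
noncomputable def kappa {d m : ℕ} (A : Matrix (Fin d) (Fin m) ℝ) : ℝ :=
  opNorm A / sigmaMin A

/-- Q is an orthogonal matrix. -/
def IsOrth {d : ℕ} (Q : Matrix (Fin d) (Fin d) ℝ) : Prop :=
  Qᵀ * Q = 1 ∧ Q * Qᵀ = 1

/-- Nuclear norm, via the dual characterization ‖M‖_* = max_{Q ∈ O(d)} ⟨Q, M⟩. -/
noncomputable def nuclearNorm {d : ℕ} (M : Matrix (Fin d) (Fin d) ℝ) : ℝ :=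
  sSup {r : ℝ | ∃ Q : Matrix (Fin d) (Fin d) ℝ, IsOrth Q ∧ r = Matrix.trace (Qᵀ * M)}

/-- The i-th d×k block of an (nd)×k block matrix. -/
def blk {n d k : ℕ} (S : Matrix (Fin n × Fin d) (Fin k) ℝ) (i : Fin n) :
    Matrix (Fin d) (Fin k) ℝ :=
  Matrix.of fun a b => S (i, a) b

/-- The i-th diagonal d×d block of an (nd)×(nd) matrix. -/
def dblk {n d : ℕ} (G : Matrix (Fin n × Fin d) (Fin n × Fin d) ℝ) (i : Fin n) :
    Matrix (Fin d) (Fin d) ℝ :=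
  Matrix.of fun a b => G (i, a) (i, b)

/-- S ∈ O(d)^{⊗n}: each of the n d×d blocks of S is orthogonal. -/
def OrthBlocks {n d : ℕ} (S : Matrix (Fin n × Fin d) (Fin d) ℝ) : Prop :=
  ∀ i, IsOrth (blk S i)

/-- Z ∈ ℝ^{nd×d}: the vertical stack of n copies of I_d. -/
def ZStack (n d : ℕ) : Matrix (Fin n × Fin d) (Fin d) ℝ :=
  Matrix.of fun p j => if p.2 = j then 1 else 0

/-- Vertical stack of n given d×k matrices. -/
def stack {n d k : ℕ} (B : Fin n → Matrix (Fin d) (Fin k) ℝ) :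
    Matrix (Fin n × Fin d) (Fin k) ℝ :=
  Matrix.of fun p b => B p.1 p.2 b

/-- d_F(X,Y) = min_{Q ∈ O(d)} ‖X − YQ‖_F. -/
noncomputable def dF {n d : ℕ} (X Y : Matrix (Fin n × Fin d) (Fin d) ℝ) : ℝ :=
  sInf {r : ℝ | ∃ Q, IsOrth Q ∧ r = frob (X - Y * Q)}

/-- R is a polar factor P(X) of X: an orthogonal global minimizer of ‖X − Q‖_F over O(d). -/
def IsPolar {d : ℕ} (X R : Matrix (Fin d) (Fin d) ℝ) : Prop :=
  IsOrth R ∧ ∀ Q : Matrix (Fin d) (Fin d) ℝ, IsOrth Q → frob (X - R) ≤ frob (X - Q)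

/-- S = P_n(X): blockwise polar factor. -/
def IsPolarBlocks {n d : ℕ} (X S : Matrix (Fin n × Fin d) (Fin d) ℝ) : Prop :=
  ∀ i, IsPolar (blk X i) (blk S i)

/-- U collects (an orthonormal basis of the span of) the top d left singular vectors of D:
U has orthonormal columns and maximizes the Ky Fan quantity trace(Uᵀ(DDᵀ)U). -/
def IsTopSingVecs {N : Type*} [Fintype N] {d m : ℕ} (D : Matrix N (Fin m) ℝ)
    (U : Matrix N (Fin d) ℝ) : Prop :=
  Uᵀ * U = 1 ∧ ∀ Q : Matrix N (Fin d) ℝ, Qᵀ * Q = 1 →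
    Matrix.trace (Qᵀ * (D * Dᵀ) * Q) ≤ Matrix.trace (Uᵀ * (D * Dᵀ) * U)

/-- (U, S, V) is a top-d singular triple of D: orthonormal U, V, diagonal nonnegative S,
DV = US, DᵀU = VS, and U spans a top-d left singular subspace. -/
def IsSVDTriple {N : Type*} [Fintype N] {d m : ℕ} (D : Matrix N (Fin m) ℝ)
    (U : Matrix N (Fin d) ℝ) (S : Matrix (Fin d) (Fin d) ℝ)
    (V : Matrix (Fin m) (Fin d) ℝ) : Prop :=
  Vᵀ * V = 1 ∧ (∀ a b, a ≠ b → S a b = 0) ∧ (∀ a, 0 ≤ S a a) ∧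
    D * V = U * S ∧ Dᵀ * U = V * S ∧ IsTopSingVecs D U

/-- The generalized power method sequence with spectral initialization, run on the data
matrix D (so with C = DDᵀ): S⁰ = P_n(U) for top singular vectors U of D, and
S^{t+1} = P_n(C Sᵗ). -/
def IsGPM {n d m : ℕ} (D : Matrix (Fin n × Fin d) (Fin m) ℝ)
    (S : ℕ → Matrix (Fin n × Fin d) (Fin d) ℝ) : Prop :=
  (∃ U, IsTopSingVecs D U ∧ IsPolarBlocks U (S 0)) ∧
    ∀ t, IsPolarBlocks (D * Dᵀ * S t) (S (t + 1))

/-- W^(i): W with its i-th block row replaced by 0. -/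
def mask {n d m : ℕ} (W : Matrix (Fin n × Fin d) (Fin m) ℝ) (i : Fin n) :
    Matrix (Fin n × Fin d) (Fin m) ℝ :=
  Matrix.of fun p b => if p.1 = i then 0 else W p b

/-- The noise matrix Δ = WAᵀZᵀ + ZAWᵀ + σWWᵀ. -/
noncomputable def delta {n d m : ℕ} (A : Matrix (Fin d) (Fin m) ℝ)
    (W : Matrix (Fin n × Fin d) (Fin m) ℝ) (σ : ℝ) :
    Matrix (Fin n × Fin d) (Fin n × Fin d) ℝ :=
  W * Aᵀ * (ZStack n d)ᵀ + ZStack n d * A * Wᵀ + σ • (W * Wᵀ)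

/-- The i-th block column Δ_i = WAᵀ + ZAW_iᵀ + σWW_iᵀ of Δ. -/
noncomputable def deltaCol {n d m : ℕ} (A : Matrix (Fin d) (Fin m) ℝ)
    (W : Matrix (Fin n × Fin d) (Fin m) ℝ) (σ : ℝ) (i : Fin n) :
    Matrix (Fin n × Fin d) (Fin d) ℝ :=
  W * Aᵀ + ZStack n d * A * (blk W i)ᵀ + σ • (W * (blk W i)ᵀ)

/-- The operator L S = C S/(n‖A‖²) with C = ZAAᵀZᵀ + σΔ. -/
noncomputable def Lop {n d m : ℕ} (A : Matrix (Fin d) (Fin m) ℝ)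
    (W : Matrix (Fin n × Fin d) (Fin m) ℝ) (σ : ℝ)
    (S : Matrix (Fin n × Fin d) (Fin d) ℝ) : Matrix (Fin n × Fin d) (Fin d) ℝ :=
  ((n : ℝ) * opNorm A ^ 2)⁻¹ •
    ((ZStack n d * A * Aᵀ * (ZStack n d)ᵀ + σ • delta A W σ) * S)

/-- √(nd) + √m + √(2γ n log n). -/
noncomputable def bnd1 (n d m : ℕ) (γ : ℝ) : ℝ :=
  Real.sqrt ((n : ℝ) * d) + Real.sqrt (m : ℝ) + Real.sqrt (2 * γ * n * Real.log n)

/-- √(nd) + √m + √(2γ log n). -/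
noncomputable def bnd2 (n d m : ℕ) (γ : ℝ) : ℝ :=
  Real.sqrt ((n : ℝ) * d) + Real.sqrt (m : ℝ) + Real.sqrt (2 * γ * Real.log n)

/-- The basin of attraction N_ε. -/
def memNeps {n d : ℕ} (ε : ℝ) (S : Matrix (Fin n × Fin d) (Fin d) ℝ) : Prop :=
  OrthBlocks S ∧ dF S (ZStack n d) ≤ ε * Real.sqrt ((n : ℝ) * d)

/-- The basin of attraction N_{ξ,∞}. -/
def memNxi {n d m : ℕ} (W : Matrix (Fin n × Fin d) (Fin m) ℝ) (γ ξ : ℝ)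
    (S : Matrix (Fin n × Fin d) (Fin d) ℝ) : Prop :=
  OrthBlocks S ∧ ∀ i, frob (blk W i * Wᵀ * S) ≤ ξ * Real.sqrt (d : ℝ) * bnd1 n d m γ ^ 2

/-- The distribution of a matrix with i.i.d. standard Gaussian N(0,1) entries. -/
noncomputable def stdGaussian (ι κ : Type*) [Fintype ι] [Fintype κ] :
    Measure (ι → κ → ℝ) :=
  Measure.pi fun _ : ι => Measure.pi fun _ : κ => ProbabilityTheory.gaussianReal 0 1

/-! For unit vectors `u` and `v = Qᵀu`, expanding `‖Sv − Zu‖² = 2n − 2 uᵀZᵀSv` and bounding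
`‖Sv − Zu‖ = ‖(S − ZQ)v‖ ≤ ‖S − ZQ‖_F` and `uᵀZᵀSv ≤ ‖uᵀZᵀS‖` gives
`‖uᵀZᵀS‖ ≥ n − ‖S − ZQ‖_F²/2` for every `Q ∈ O(d)`, hence `σ_min(ZᵀS) ≥ n − d_F(S, Z)²/2`. -/

section Norms

variable {α β : Type*} [Fintype α] [Fintype β]

lemma vnorm_eq_sqrt_dotProduct (v : β → ℝ) : vnorm v = √(v ⬝ᵥ v) := by
  simp only [vnorm, dotProduct, sq]

lemma sq_frob (X : Matrix α β ℝ) : frob X ^ 2 = ∑ i, ∑ j, X i j ^ 2 :=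
  Real.sq_sqrt (Finset.sum_nonneg fun _ _ => Finset.sum_nonneg fun _ _ => sq_nonneg _)

lemma frob_nonneg (X : Matrix α β ℝ) : 0 ≤ frob X :=
  Real.sqrt_nonneg _

lemma dotProduct_le_vnorm_mul_vnorm (w v : β → ℝ) : w ⬝ᵥ v ≤ vnorm w * vnorm v :=
  Real.sum_mul_le_sqrt_mul_sqrt Finset.univ w v

lemma exists_vnorm_eq_one [Nonempty β] : ∃ u : β → ℝ, vnorm u = 1 := by
  obtain ⟨j⟩ := ‹Nonempty β›
  classical
  refine ⟨Pi.single j 1, ?_⟩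
  rw [vnorm, ← Real.sqrt_one]
  congr 1
  simp [apply_ite (· ^ 2 : ℝ → ℝ), Pi.single_apply]

lemma mulVec_dotProduct_mulVec_le_sq_frob_mul (X : Matrix α β ℝ) (v : β → ℝ) :
    X *ᵥ v ⬝ᵥ X *ᵥ v ≤ frob X ^ 2 * (v ⬝ᵥ v) := by
  rw [sq_frob, Finset.sum_mul]
  refine Finset.sum_le_sum fun i _ => ?_
  simpa [mulVec, dotProduct, sq] using Finset.sum_mul_sq_le_sq_mul_sq Finset.univ (X i) v

lemma mulVec_dotProduct_mulVec_of_transpose_mul_self {X : Matrix α β ℝ} {c : ℝ}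
    [DecidableEq β] (hX : Xᵀ * X = c • 1) (v : β → ℝ) :
    X *ᵥ v ⬝ᵥ X *ᵥ v = c * (v ⬝ᵥ v) := by
  rw [dotProduct_mulVec, ← vecMul_transpose, vecMul_vecMul, hX, vecMul_smul, vecMul_one,
    smul_dotProduct, smul_eq_mul]

lemma le_sigmaMin [Nonempty α] {X : Matrix α β ℝ} {c : ℝ}
    (h : ∀ u, vnorm u = 1 → c ≤ vnorm (u ᵥ* X)) : c ≤ sigmaMin X := by
  obtain ⟨u, hu⟩ := exists_vnorm_eq_one (β := α)
  refine le_csInf ⟨_, u, hu, rfl⟩ ?_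
  rintro r ⟨u, hu, rfl⟩
  exact h u hu

end Norms

lemma isOrth_one {d : ℕ} : IsOrth (1 : Matrix (Fin d) (Fin d) ℝ) :=
  ⟨by simp, by simp⟩

lemma dF_nonneg {n d : ℕ} (X Y : Matrix (Fin n × Fin d) (Fin d) ℝ) : 0 ≤ dF X Y :=
  Real.sInf_nonneg fun _ ⟨_, _, hr⟩ => hr ▸ frob_nonneg _

lemma le_sq_dF {n d : ℕ} {X Y : Matrix (Fin n × Fin d) (Fin d) ℝ} {c : ℝ}
    (h : ∀ Q : Matrix (Fin d) (Fin d) ℝ, IsOrth Q → c ≤ frob (X - Y * Q) ^ 2) :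
    c ≤ dF X Y ^ 2 := by
  have hsqrt : √c ≤ dF X Y := by
    refine le_csInf ⟨_, 1, isOrth_one, rfl⟩ ?_
    rintro r ⟨Q, hQ, rfl⟩
    exact Real.sqrt_le_iff.2 ⟨frob_nonneg _, h Q hQ⟩
  exact (Real.sqrt_le_iff.1 hsqrt).2

lemma OrthBlocks.transpose_mul_self {n d : ℕ} {X : Matrix (Fin n × Fin d) (Fin d) ℝ}
    (hX : OrthBlocks X) : Xᵀ * X = (n : ℝ) • 1 := by
  ext a b
  have hblock (i : Fin n) :
      ∑ c, X (i, c) a * X (i, c) b = (1 : Matrix (Fin d) (Fin d) ℝ) a b := by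
    simpa [mul_apply, blk] using congrFun (congrFun (hX i).1 a) b
  simp [mul_apply, Fintype.sum_prod_type, hblock]

lemma orthBlocks_ZStack (n d : ℕ) : OrthBlocks (ZStack n d) := by
  have hblk (i : Fin n) : blk (ZStack n d) i = 1 := by
    ext a b
    simp [blk, ZStack, one_apply]
  exact fun i => hblk i ▸ isOrth_one

lemma sub_half_sq_frob_le_vnorm_vecMul {n d : ℕ} {S : Matrix (Fin n × Fin d) (Fin d) ℝ}
    (hS : OrthBlocks S) {Q : Matrix (Fin d) (Fin d) ℝ} (hQ : IsOrth Q) {u : Fin d → ℝ}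
    (hu : vnorm u = 1) :
    (n : ℝ) - frob (S - ZStack n d * Q) ^ 2 / 2 ≤ vnorm (u ᵥ* ((ZStack n d)ᵀ * S)) := by
  set Z := ZStack n d
  set v := Qᵀ *ᵥ u
  have huu : u ⬝ᵥ u = 1 := Real.sqrt_eq_one.1 (vnorm_eq_sqrt_dotProduct u ▸ hu)
  have hvv : v ⬝ᵥ v = 1 := by
    rw [mulVec_dotProduct_mulVec_of_transpose_mul_self (c := 1) (by simp [hQ.2]), huu, one_mul]
  have hv : vnorm v = 1 := by rw [vnorm_eq_sqrt_dotProduct, hvv, Real.sqrt_one]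
  have hdiff : (S - Z * Q) *ᵥ v = S *ᵥ v - Z *ᵥ u := by
    rw [sub_mulVec, ← mulVec_mulVec, mulVec_mulVec u Q Qᵀ, hQ.2, one_mulVec]
  have hexpand :
      (S *ᵥ v - Z *ᵥ u) ⬝ᵥ (S *ᵥ v - Z *ᵥ u) = 2 * n - 2 * (Z *ᵥ u ⬝ᵥ S *ᵥ v) := by
    rw [sub_dotProduct, dotProduct_sub, dotProduct_sub, dotProduct_comm (S *ᵥ v) (Z *ᵥ u),
      mulVec_dotProduct_mulVec_of_transpose_mul_self hS.transpose_mul_self,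
      mulVec_dotProduct_mulVec_of_transpose_mul_self (orthBlocks_ZStack n d).transpose_mul_self,
      hvv, huu]
    ring
  have hcross : Z *ᵥ u ⬝ᵥ S *ᵥ v ≤ vnorm (u ᵥ* (Zᵀ * S)) := by
    rw [dotProduct_mulVec, ← vecMul_transpose, vecMul_vecMul]
    simpa [hv] using dotProduct_le_vnorm_mul_vnorm (u ᵥ* (Zᵀ * S)) v
  have hfrob := mulVec_dotProduct_mulVec_le_sq_frob_mul (S - Z * Q) v
  rw [hdiff, hexpand, hvv, mul_one] at hfrob
  linarith

lemma sub_half_sq_dF_le_sigmaMin {n d : ℕ} [NeZero d] {S : Matrix (Fin n × Fin d) (Fin d) ℝ}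
    (hS : OrthBlocks S) :
    (n : ℝ) - dF S (ZStack n d) ^ 2 / 2 ≤ sigmaMin ((ZStack n d)ᵀ * S) := by
  have h : 2 * ((n : ℝ) - sigmaMin ((ZStack n d)ᵀ * S)) ≤ dF S (ZStack n d) ^ 2 := by
    refine le_sq_dF fun Q hQ => ?_
    have := le_sigmaMin fun u hu => sub_half_sq_frob_le_vnorm_vecMul hS hQ hu
    linarith
  linarith

theorem sigmaMin_ZtS_lower_bound_general (n d : ℕ) (hd : 1 ≤ d)
    (ε : ℝ)
    (S : Matrix (Fin n × Fin d) (Fin d) ℝ) (hS : OrthBlocks S)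
    (hdist : dF S (ZStack n d) ≤ ε * Real.sqrt ((n : ℝ) * d)) :
    (n : ℝ) * (1 - ε ^ 2 * d / 2) ≤ sigmaMin ((ZStack n d)ᵀ * S) := by
  have : NeZero d := ⟨by omega⟩
  have hsq : dF S (ZStack n d) ^ 2 ≤ ε ^ 2 * (n * d) := by
    calc dF S (ZStack n d) ^ 2 ≤ (ε * Real.sqrt ((n : ℝ) * d)) ^ 2 :=
          pow_le_pow_left₀ (dF_nonneg _ _) hdist 2
      _ = ε ^ 2 * (n * d) := by rw [mul_pow, Real.sq_sqrt (by positivity)]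
  linarith [sub_half_sq_dF_le_sigmaMin hS]

/-- if S ∈ O(d)^{⊗n} satisfies d_F(S,Z) ≤ ε√(nd) then
σ_min(ZᵀS) ≥ n(1 − ε²d/2). -/
theorem sigmaMin_ZtS_lower_bound (n d : ℕ) (hn : 1 ≤ n) (hd : 1 ≤ d)
    (ε : ℝ) (hε : 0 < ε)
    (S : Matrix (Fin n × Fin d) (Fin d) ℝ) (hS : OrthBlocks S)
    (hdist : dF S (ZStack n d) ≤ ε * Real.sqrt ((n : ℝ) * d)) :
    (n : ℝ) * (1 - ε ^ 2 * d / 2) ≤ sigmaMin ((ZStack n d)ᵀ * S) :=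
  sigmaMin_ZtS_lower_bound_general n d hd ε S hS hdist

end GOPP
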